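/- arXiv:1001.3893 — 2 statements merged into one kernel-verified Lean document; each statement's English description precedes it below -/
import Mathlib

section
/- Group property of the nonlinear correlation dynamics: define on sequences f = (f_s)_{s≥1} of trace class operators the nonlinear map (𝔄_t(f))_n = Σ_{P:(1,...,n)=∪X_i} 𝔄_{|P|}(t,{X_1},...,{X_{|P|}}) S_n^± Π_i f_{|X_i|}(X_i), where 𝔄_{|P|}(t) is the cluster cumulant built from the groups G(−t). Then 𝔄_{t₁}(𝔄_{t₂}(f)) = 𝔄_{t₁+t₂}(f) for all real t₁, t₂. -/
/-!
Write `Exp f (Y) = Σ_P Π_{X ∈ P} f X` for the cluster expansion and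
`Log F (Y) = Σ_P (-1)^(|P|-1) (|P|-1)! Π_{X ∈ P} F X`, sums over partitions `P` of `Y`.
A partition of the blocks of a fine partition `π` is the same thing as a coarse partition `σ`
together with a partition of each block of `σ`; regrouping the double sum in this way gives
`𝔄_t = Log ∘ G(t) ∘ Exp`, where `G(t)` acts on `F (W)` by `G W t`. The coefficients of `Log` are
the Möbius function of the partition lattice, so `Exp ∘ Log` is the identity on nonempty sets,
and `𝔄_{t₁} ∘ 𝔄_{t₂} = Log ∘ G(t₁) ∘ G(t₂) ∘ Exp = 𝔄_{t₁+t₂}`.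
-/

open Finset

/-- The nonlinear correlation dynamics `𝔄_t(f)` on families of (commuting) particle
observables: `(𝔄_t(f))(Y) = Σ_{P : partition of Y} 𝔄_{|P|}(t,{X_1},…,{X_{|P|}})
applied to Π_i f(X_i)`, where the cluster cumulant is
`𝔄_{|P|}(t,…) = Σ_{P' : partition of the set of blocks of P}
(−1)^{|P'|−1}(|P'|−1)! Π_k G(θ(Z_k))(−t)`, the declusterization `θ(Z)` of a set of
blocks `Z` being the union of its blocks, and each group `G(θ(Z_k))(−t)` acting on
the sub-product `Π_{X ∈ Z_k} f(X)`. -/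
noncomputable def clusterCumulantMap {α A : Type*} [DecidableEq α] [CommRing A]
    (G : Finset α → ℝ → (A →+ A)) (t : ℝ) (f : Finset α → A) (Y : Finset α) : A :=
  ∑ P : Finpartition Y, ∑ Q : Finpartition P.parts,
    ((-1 : A) ^ (Q.parts.card - 1) * ((Q.parts.card - 1).factorial : A)) *
      ∏ Z ∈ Q.parts, G (Z.sup id) t (∏ X ∈ Z, f X)

namespace Finpartition

variable {α : Type*} [DecidableEq α] {s T : Finset α}

theorem sup_erase_parts {P : Finpartition s} (hT : T ∈ P.parts) :
    (P.parts.erase T).sup id = s \ T := by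
  have hdisj : Disjoint T ((P.parts.erase T).sup id) := Finset.disjoint_sup_right.2 fun X hX =>
    P.disjoint hT (mem_of_mem_erase hX) (ne_of_mem_erase hX).symm
  conv_rhs => rw [← P.sup_parts, ← insert_erase hT, sup_insert]
  exact (union_sdiff_cancel_left hdisj).symm

theorem notMem_parts_of_sdiff (D : Finpartition (s \ T)) : T ∉ D.parts :=
  fun h => (D.ne_bot h) (disjoint_self.1 (sdiff_disjoint.mono_left (D.le h)))

theorem sigma_sdiff_ext {T T' : Finset α} {D : Finpartition (s \ T)}
    {D' : Finpartition (s \ T')} (hT : T = T') (hD : D.parts = D'.parts) :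
    (⟨T, D⟩ : Σ T : Finset α, Finpartition (s \ T)) = ⟨T', D'⟩ := by
  subst hT
  rw [Finpartition.ext hD]

def insertPart (D : Finpartition (s \ T)) (hT : T.Nonempty) (hTs : T ⊆ s) : Finpartition s :=
  D.extend (nonempty_iff_ne_empty.1 hT) sdiff_disjoint (sdiff_sup_cancel hTs)

theorem sum_eq_sum_part_mem {M : Type*} [AddCommMonoid M] {a : α} (ha : a ∈ s)
    (g : Finset (Finset α) → M) :
    ∑ P : Finpartition s, g P.parts =
      ∑ T ∈ s.powerset with a ∈ T, ∑ D : Finpartition (s \ T), g (insert T D.parts) := by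
  rw [sum_sigma']
  have hmem : ∀ x ∈ (s.powerset.filter (a ∈ ·)).sigma
      fun T => (univ : Finset (Finpartition (s \ T))), x.1 ⊆ s ∧ a ∈ x.1 :=
    fun x hx => by simpa using (mem_sigma.1 hx).1
  refine sum_bij' (fun P _ => ⟨P.part a, P.ofSubset (erase_subset _ _)
      (sup_erase_parts (P.part_mem.2 ha))⟩)
    (fun x hx => x.2.insertPart ⟨a, (hmem x hx).2⟩ (hmem x hx).1) ?_ ?_ ?_ ?_ ?_
  · intro P _
    exact mem_sigma.2 ⟨mem_filter.2 ⟨mem_powerset.2 (P.part_subset a), P.mem_part_self.2 ha⟩,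
      mem_univ _⟩
  · intro _ _
    exact mem_univ _
  · intro P _
    exact Finpartition.ext (insert_erase (P.part_mem.2 ha))
  · rintro ⟨T, D⟩ hx
    have hpart : (D.insertPart ⟨a, (hmem _ hx).2⟩ (hmem _ hx).1).part a = T :=
      part_eq_of_mem _ (mem_insert_self _ _) (hmem _ hx).2
    refine sigma_sdiff_ext hpart ?_
    rw [ofSubset_parts, hpart]
    exact erase_insert (notMem_parts_of_sdiff D)
  · intro P _
    simp only [ofSubset_parts, insert_erase (P.part_mem.2 ha)]

theorem card_parts_le_one_iff (hs : s.Nonempty) (P : Finpartition s) :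
    #P.parts ≤ 1 ↔ P = indiscrete (nonempty_iff_ne_empty.1 hs) := by
  refine ⟨fun h => ?_, fun h => h ▸ (card_singleton s).le⟩
  obtain ⟨X, hX⟩ := card_eq_one.1 (h.antisymm (card_pos.2 (P.parts_nonempty hs.ne_empty)))
  have hXs : X = s := by simpa [hX] using P.sup_parts
  exact Finpartition.ext (hX.trans (congrArg _ hXs))

theorem sum_ite_card_parts_le_one {M : Type*} [AddCommMonoid M] (hs : s.Nonempty)
    (g : Finset (Finset α) → M) :
    ∑ P : Finpartition s, (if #P.parts ≤ 1 then g P.parts else 0) = g {s} := by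
  simp_rw [card_parts_le_one_iff hs]
  rw [Fintype.sum_ite_eq']
  rfl

theorem prod_prod_parts {β M : Type*} [DecidableEq β] [CommMonoid M] {t : Finset β}
    (P : Finpartition t) (g : β → M) :
    ∏ X ∈ P.parts, ∏ x ∈ X, g x = ∏ x ∈ t, g x := by
  conv_rhs => rw [← P.biUnion_parts, prod_biUnion P.disjoint]
  rfl

theorem mem_of_subset_sup {P : Finpartition s} {Z : Finset (Finset α)} {X : Finset α}
    (hZ : Z ⊆ P.parts) (hX : X ∈ P.parts) (hXZ : X ⊆ Z.sup id) : X ∈ Z := by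
  by_contra h
  exact P.ne_bot hX (disjoint_self.1 ((P.supIndep hZ hX h).mono_right hXZ))

theorem filter_subset_sup {P : Finpartition s} {Z : Finset (Finset α)} (hZ : Z ⊆ P.parts) :
    P.parts.filter (· ⊆ Z.sup id) = Z := by
  ext X
  exact ⟨fun hX => mem_of_subset_sup hZ (mem_filter.1 hX).1 (mem_filter.1 hX).2,
    fun hX => mem_filter.2 ⟨hZ hX, le_sup (f := id) hX⟩⟩

/-- The paper's declusterization: the blocks `θ(Z) = Z.sup id` for `Z ∈ C`. -/
def coarsen (P : Finpartition s) (C : Finpartition P.parts) : Finpartition s where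
  parts := C.parts.image fun Z => Z.sup id
  supIndep := SupIndep.image (f := id) (g := fun Z : Finset (Finset α) => Z.sup id) <|
    supIndep_iff_pairwiseDisjoint.2 fun _ hZ _ hZ' hne =>
    P.supIndep.disjoint_sup_sup (C.le hZ) (C.le hZ') (C.disjoint hZ hZ' hne)
  sup_parts := by
    rw [sup_image, Function.id_comp, ← sup_biUnion, ← sup_eq_biUnion]
    exact (congrArg (sup · id) C.sup_parts).trans P.sup_parts
  bot_notMem h := by
    obtain ⟨Z, hZ, hZe⟩ := mem_image.1 h
    obtain ⟨X, hX⟩ := C.nonempty_of_mem_parts hZ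
    exact P.ne_bot (C.le hZ hX) (le_bot_iff.1 (hZe ▸ le_sup (f := id) hX))

theorem sup_filter_subset_of_mem_coarsen {P : Finpartition s} {C : Finpartition P.parts}
    {W : Finset α} (hW : W ∈ (P.coarsen C).parts) : (P.parts.filter (· ⊆ W)).sup id = W := by
  obtain ⟨Z, hZ, rfl⟩ := mem_image.1 hW
  rw [filter_subset_sup (C.le hZ)]


def bindGrouping (σ : Finpartition s) (Q : ∀ W : σ.parts, Finpartition W.1) :
    Finpartition (σ.bind fun W hW => Q ⟨W, hW⟩).parts where
  parts := univ.image fun W => (Q W).parts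
  supIndep := SupIndep.image (f := id) (g := fun W => (Q W).parts) <|
    supIndep_iff_pairwiseDisjoint.2 fun W _ W' _ hne => disjoint_left.2 fun X hX hX' =>
      (Q W).ne_bot hX <| disjoint_self.1 <|
        (σ.disjoint W.2 W'.2 (Subtype.coe_injective.ne hne)).mono ((Q W).le hX) ((Q W').le hX')
  sup_parts := by
    rw [sup_image, Function.id_comp, bind_parts, sup_eq_biUnion, univ_eq_attach]
  bot_notMem h := by
    obtain ⟨W, -, hW⟩ := mem_image.1 h
    exact σ.ne_bot W.2 ((Q W).parts_eq_empty_iff.1 hW)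

theorem coarsen_bindGrouping (σ : Finpartition s) (Q : ∀ W : σ.parts, Finpartition W.1) :
    (σ.bind fun W hW => Q ⟨W, hW⟩).coarsen (σ.bindGrouping Q) = σ := by
  ext1
  have hsup : ∀ W : σ.parts, (Q W).parts.sup id = W.1 := fun W => (Q W).sup_parts
  simp only [coarsen, bindGrouping, image_image, Function.comp_def, hsup, univ_eq_attach,
    attach_image_val]

theorem filter_subset_bind (σ : Finpartition s) (Q : ∀ W : σ.parts, Finpartition W.1)
    {W : Finset α} (hW : W ∈ σ.parts) :
    (σ.bind fun W hW => Q ⟨W, hW⟩).parts.filter (· ⊆ W) = (Q ⟨W, hW⟩).parts := by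
  ext X
  simp only [mem_filter, mem_bind]
  constructor
  · rintro ⟨⟨W', hW', hX⟩, hXW⟩
    obtain ⟨x, hx⟩ := (Q _).nonempty_of_mem_parts hX
    obtain rfl := σ.eq_of_mem_parts hW' hW ((Q _).le hX hx) (hXW hx)
    exact hX
  · exact fun hX => ⟨⟨W, hW, hX⟩, (Q _).le hX⟩

theorem bind_ofSubset_coarsen (π : Finpartition s) (C : Finpartition π.parts) :
    ((π.coarsen C).bind fun W hW =>
      π.ofSubset (filter_subset (· ⊆ W) _) (sup_filter_subset_of_mem_coarsen hW)) = π := by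
  ext1
  ext X
  simp only [mem_bind, ofSubset_parts, mem_filter]
  constructor
  · rintro ⟨W, -, hX, -⟩
    exact hX
  · intro hX
    obtain ⟨Z, hZ, hXZ⟩ := C.exists_mem hX
    exact ⟨Z.sup id, mem_image_of_mem _ hZ, hX, le_sup (f := id) hXZ⟩

theorem bindGrouping_coarsen_parts (π : Finpartition s) (C : Finpartition π.parts) :
    ((π.coarsen C).bindGrouping fun W =>
      π.ofSubset (filter_subset (· ⊆ W.1) _) (sup_filter_subset_of_mem_coarsen W.2)).parts =
      C.parts := by
  simp only [bindGrouping, ofSubset_parts]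
  change (π.coarsen C).parts.attach.image ((fun W => π.parts.filter (· ⊆ W)) ∘ (↑)) = _
  rw [← image_image, attach_image_val]
  simp only [coarsen, image_image]
  exact (image_congr fun Z hZ => filter_subset_sup (C.le hZ)).trans image_id

theorem sigma_pi_ext {σ σ' : Finpartition s} {Q : ∀ W : σ.parts, Finpartition W.1}
    {Q' : ∀ W : σ'.parts, Finpartition W.1} (h : σ = σ')
    (hQ : ∀ W (hW : W ∈ σ.parts) (hW' : W ∈ σ'.parts),
      (Q ⟨W, hW⟩).parts = (Q' ⟨W, hW'⟩).parts) :
    (⟨σ, Q⟩ : Σ σ : Finpartition s, ∀ W : σ.parts, Finpartition W.1) = ⟨σ', Q'⟩ := by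
  subst h
  congr
  funext W
  exact Finpartition.ext (hQ W W.2 W.2)

theorem sigma_parts_ext {π π' : Finpartition s} {C : Finpartition π.parts}
    {C' : Finpartition π'.parts} (h : π = π') (hC : C.parts = C'.parts) :
    (⟨π, C⟩ : Σ π : Finpartition s, Finpartition π.parts) = ⟨π', C'⟩ := by
  subst h
  rw [Finpartition.ext hC]

def sigmaRefineEquiv :
    (Σ σ : Finpartition s, ∀ W : σ.parts, Finpartition W.1) ≃
      Σ π : Finpartition s, Finpartition π.parts where
  toFun x := ⟨x.1.bind fun W hW => x.2 ⟨W, hW⟩, x.1.bindGrouping x.2⟩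
  invFun y := ⟨y.1.coarsen y.2, fun W =>
    y.1.ofSubset (filter_subset (· ⊆ W.1) _) (sup_filter_subset_of_mem_coarsen W.2)⟩
  left_inv := by
    rintro ⟨σ, Q⟩
    exact sigma_pi_ext (coarsen_bindGrouping σ Q) fun W _ hW => filter_subset_bind σ Q hW
  right_inv := by
    rintro ⟨π, C⟩
    exact sigma_parts_ext (bind_ofSubset_coarsen π C) (bindGrouping_coarsen_parts π C)

theorem bindGrouping_parts_injective (σ : Finpartition s)
    (Q : ∀ W : σ.parts, Finpartition W.1) : Function.Injective fun W => (Q W).parts :=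
  fun W W' h =>
    Subtype.ext <| (Q W).sup_parts.symm.trans <| (congrArg (sup · id) h).trans (Q W').sup_parts

theorem card_bindGrouping (σ : Finpartition s) (Q : ∀ W : σ.parts, Finpartition W.1) :
    #(σ.bindGrouping Q).parts = #σ.parts := by
  rw [bindGrouping, card_image_of_injective _ (bindGrouping_parts_injective σ Q), card_univ,
    Fintype.card_coe]

theorem prod_bindGrouping {R : Type*} [CommMonoid R] (σ : Finpartition s)
    (Q : ∀ W : σ.parts, Finpartition W.1) (k : Finset α → Finset (Finset α) → R) :
    ∏ Z ∈ (σ.bindGrouping Q).parts, k (Z.sup id) Z = ∏ W : σ.parts, k W (Q W).parts := by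
  rw [bindGrouping, prod_image fun W _ W' _ h => bindGrouping_parts_injective σ Q h]
  exact prod_congr rfl fun W _ => by rw [(Q W).sup_parts]

theorem sum_mul_prod_sum_finpartition {R : Type*} [CommSemiring R] (s : Finset α) (u : ℕ → R)
    (k : Finset α → Finset (Finset α) → R) :
    ∑ σ : Finpartition s, u #σ.parts * ∏ W ∈ σ.parts, ∑ q : Finpartition W, k W q.parts =
      ∑ π : Finpartition s, ∑ C : Finpartition π.parts,
        u #C.parts * ∏ Z ∈ C.parts, k (Z.sup id) Z := by
  calc _ = ∑ x : Σ σ : Finpartition s, ∀ W : σ.parts, Finpartition W.1,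
          u #x.1.parts * ∏ W : x.1.parts, k W (x.2 W).parts := by
        rw [Fintype.sum_sigma]
        refine sum_congr rfl fun σ _ => ?_
        rw [← prod_coe_sort, Fintype.prod_sum, mul_sum]
    _ = ∑ y : Σ π : Finpartition s, Finpartition π.parts,
          u #y.2.parts * ∏ Z ∈ y.2.parts, k (Z.sup id) Z :=
        Fintype.sum_equiv sigmaRefineEquiv _ _ fun x => by
          simp only [sigmaRefineEquiv, Equiv.coe_fn_mk, card_bindGrouping, prod_bindGrouping]
    _ = _ := Fintype.sum_sigma _

end Finpartition

section ClusterExpansion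

variable {α : Type*} [DecidableEq α] {A : Type*} [CommRing A]

variable (A) in
/-- The Möbius function `μ(0̂, 1̂)` of the lattice of partitions of an `n`-set. -/
def cumulantCoeff (n : ℕ) : A := (-1) ^ (n - 1) * (n - 1).factorial

theorem cumulantCoeff_succ_succ (n : ℕ) :
    (n + 1) * cumulantCoeff A (n + 1) + cumulantCoeff A (n + 2) = 0 := by
  simp only [cumulantCoeff, Nat.add_sub_cancel, show n + 2 - 1 = n + 1 by omega,
    Nat.factorial_succ, pow_succ]
  push_cast
  ring

theorem sum_cumulantCoeff_mul_ite {s : Finset α} {a : α} (ha : a ∈ s) :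
    ∑ T ∈ s.powerset with a ∈ T, cumulantCoeff A #T * (if #(s \ T) ≤ 1 then 1 else 0) =
      if #s ≤ 1 then 1 else 0 := by
  have hcompl :
      ∑ T ∈ s.powerset with a ∈ T, cumulantCoeff A #T * (if #(s \ T) ≤ 1 then 1 else 0) =
        ∑ U ∈ (s.erase a).powerset,
          cumulantCoeff A (#s - #U) * (if #U ≤ 1 then 1 else 0) := by
    refine sum_nbij' (s \ ·) (s \ ·) ?_ ?_ ?_ ?_ ?_
    · intro T hT
      simp only [mem_filter, mem_powerset] at hT ⊢
      exact fun x hx =>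
        mem_erase.2 ⟨fun h => (mem_sdiff.1 hx).2 (h ▸ hT.2), (mem_sdiff.1 hx).1⟩
    · intro U hU
      simp only [mem_filter, mem_powerset] at hU ⊢
      exact ⟨sdiff_subset, mem_sdiff.2 ⟨ha, fun h => notMem_erase a s (hU h)⟩⟩
    · intro T hT
      exact Finset.sdiff_sdiff_eq_self (mem_powerset.1 (mem_filter.1 hT).1)
    · intro U hU
      exact Finset.sdiff_sdiff_eq_self ((mem_powerset.1 hU).trans (erase_subset a s))
    · intro T hT
      rw [card_sdiff_of_subset (mem_powerset.1 (mem_filter.1 hT).1),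
        Nat.sub_sub_self (card_le_card (mem_powerset.1 (mem_filter.1 hT).1))]
  obtain ⟨m, hm⟩ := Nat.exists_eq_add_one.2 (card_pos.2 ⟨a, ha⟩)
  rw [hcompl, sum_powerset_apply_card fun k => cumulantCoeff A (#s - k) * if k ≤ 1 then 1 else 0,
    card_erase_of_mem ha, hm, Nat.add_sub_cancel]
  rcases m with _ | m
  · simp [cumulantCoeff]
  · rw [sum_range_succ', sum_range_succ']
    simpa using cumulantCoeff_succ_succ (A := A) m

theorem sum_prod_cumulantCoeff (s : Finset α) :
    ∑ P : Finpartition s, ∏ Z ∈ P.parts, cumulantCoeff A #Z = if #s ≤ 1 then 1 else 0 := by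
  induction s using Finset.strongInduction with
  | H s ih =>
  rcases s.eq_empty_or_nonempty with rfl | ⟨a, ha⟩
  · rw [← bot_eq_empty, Fintype.sum_unique, Finpartition.parts_eq_empty_iff.2 rfl, prod_empty]
    simp
  · rw [Finpartition.sum_eq_sum_part_mem ha (fun parts => ∏ Z ∈ parts, cumulantCoeff A #Z),
      ← sum_cumulantCoeff_mul_ite ha]
    refine sum_congr rfl fun T hT => ?_
    have hTs : T ⊆ s ∧ a ∈ T := by simpa using hT
    rw [← ih _ (sdiff_ssubset hTs.1 ⟨a, hTs.2⟩), mul_sum]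
    exact sum_congr rfl fun D _ => prod_insert (Finpartition.notMem_parts_of_sdiff D)

def clusterExp {R : Type*} [CommSemiring R] (f : Finset α → R) (Y : Finset α) : R :=
  ∑ P : Finpartition Y, ∏ X ∈ P.parts, f X

def clusterLog (F : Finset α → A) (Y : Finset α) : A :=
  ∑ P : Finpartition Y, cumulantCoeff A #P.parts * ∏ X ∈ P.parts, F X

theorem clusterLog_congr {F F' : Finset α → A} {Y : Finset α}
    (h : ∀ W : Finset α, W.Nonempty → F W = F' W) : clusterLog F Y = clusterLog F' Y :=
  sum_congr rfl fun P _ =>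
    congrArg _ (prod_congr rfl fun W hW => h W (P.nonempty_of_mem_parts hW))

theorem clusterExp_clusterLog (F : Finset α → A) {Y : Finset α} (hY : Y.Nonempty) :
    clusterExp (clusterLog F) Y = F Y := by
  calc clusterExp (clusterLog F) Y
      = ∑ π : Finpartition Y, ∑ C : Finpartition π.parts,
          ∏ Z ∈ C.parts, cumulantCoeff A #Z * ∏ X ∈ Z, F X := by
        simpa only [clusterExp, clusterLog, one_mul] using
          Finpartition.sum_mul_prod_sum_finpartition Y (fun _ => (1 : A))
            fun _ q => cumulantCoeff A #q * ∏ X ∈ q, F X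
    _ = ∑ π : Finpartition Y, if #π.parts ≤ 1 then ∏ X ∈ π.parts, F X else 0 := by
        refine sum_congr rfl fun π _ => ?_
        simp only [prod_mul_distrib, Finpartition.prod_prod_parts, ← sum_mul,
          sum_prod_cumulantCoeff, ite_mul, one_mul, zero_mul]
    _ = F Y := (Finpartition.sum_ite_card_parts_le_one hY fun P => ∏ X ∈ P, F X).trans
        (prod_singleton _ _)

theorem clusterCumulantMap_eq_clusterLog (G : Finset α → ℝ → (A →+ A)) (t : ℝ)
    (f : Finset α → A) (Y : Finset α) :
    clusterCumulantMap G t f Y = clusterLog (fun W => G W t (clusterExp f W)) Y := by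
  simp only [clusterLog, clusterExp, map_sum]
  exact (Finpartition.sum_mul_prod_sum_finpartition Y (cumulantCoeff A)
    fun W q => G W t (∏ X ∈ q, f X)).symm

theorem clusterExp_clusterCumulantMap (G : Finset α → ℝ → (A →+ A)) (t : ℝ)
    (f : Finset α → A) {Y : Finset α} (hY : Y.Nonempty) :
    clusterExp (clusterCumulantMap G t f) Y = G Y t (clusterExp f Y) := by
  rw [funext (clusterCumulantMap_eq_clusterLog G t f), clusterExp_clusterLog _ hY]

end ClusterExpansion

/-- Group property of the nonlinear correlation dynamics: if the evolution groups
`G X` satisfy the group property `G X (t₁+t₂) = G X t₁ ∘ G X t₂`, then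
`𝔄_{t₁}(𝔄_{t₂}(f)) = 𝔄_{t₁+t₂}(f)` for all real `t₁, t₂`. -/
theorem clusterCumulantMap_group_property
    {α A : Type*} [DecidableEq α] [CommRing A]
    (G : Finset α → ℝ → (A →+ A))
    (hG : ∀ (X : Finset α) (t₁ t₂ : ℝ) (a : A), G X (t₁ + t₂) a = G X t₁ (G X t₂ a))
    (f : Finset α → A) (t₁ t₂ : ℝ) :
    ∀ Y : Finset α, Y.Nonempty →
      clusterCumulantMap G t₁ (clusterCumulantMap G t₂ f) Y =
        clusterCumulantMap G (t₁ + t₂) f Y := by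
  intro Y _
  rw [clusterCumulantMap_eq_clusterLog, clusterCumulantMap_eq_clusterLog]
  refine clusterLog_congr fun W hW => ?_
  rw [clusterExp_clusterCumulantMap G t₂ f hW, hG]
end

section
/- The combinatorial bound Σ_{m=1}^{n} S(n,m) Σ_{k=1}^{m} k^{m−1} ≤ n! e^{3n} holds for all n ≥ 1, where S(n,m) are Stirling numbers of the second kind. -/
open Finset

/-!
Numbering the blocks of a partition of `range n` into `m` blocks gives a map `range n → Fin m`
from which the partition and the numbering can be read off, so `S(n,m) m! ≤ m ^ n`. Together with
`∑_{k ≤ m} k ^ (m-1) ≤ m ^ m ≤ m! e ^ m` each summand is at most `m ^ n e ^ m ≤ n ^ n e ^ n`,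
and `n ^ n ≤ n! e ^ n`, `n ≤ e ^ n` bound the `n` summands by `n! e ^ (3n)`.
-/

/-- The Stirling number of the second kind `S(n,m)`. -/
noncomputable def stirling (n m : ℕ) : ℕ :=
  Fintype.card {P : Finpartition (Finset.range n) // P.parts.card = m}

namespace Finpartition

variable {α : Type*} [DecidableEq α] {s : Finset α}

theorem ext_part {P Q : Finpartition s} (h : ∀ a ∈ s, P.part a = Q.part a) : P = Q := by
  ext t
  constructor
  · intro ht
    obtain ⟨a, ha, rfl⟩ := P.part_surjOn ht
    exact h a ha ▸ Q.part_mem.2 ha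
  · intro ht
    obtain ⟨a, ha, rfl⟩ := Q.part_surjOn ht
    exact (h a ha).symm ▸ P.part_mem.2 ha

theorem eq_of_part_eq_part_iff {P Q : Finpartition s}
    (h : ∀ a ∈ s, ∀ b ∈ s, P.part a = P.part b ↔ Q.part a = Q.part b) : P = Q := by
  refine ext_part fun a ha => Finset.ext fun b => ?_
  by_cases hb : b ∈ s
  · rw [P.mem_part_iff_part_eq_part hb ha, Q.mem_part_iff_part_eq_part hb ha, h b hb a ha]
  · exact iff_of_false (fun hbP => hb (P.part_subset a hbP)) (fun hbQ => hb (Q.part_subset a hbQ))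

theorem card_parts_eq_mul_factorial_le (s : Finset α) (m : ℕ) :
    Fintype.card {P : Finpartition s // #P.parts = m} * m.factorial ≤ m ^ #s := by
  let Labelled := Σ P : {P : Finpartition s // #P.parts = m}, P.1.parts ≃ Fin m
  have card_labelled :
      Fintype.card Labelled = Fintype.card {P : Finpartition s // #P.parts = m} * m.factorial := by
    rw [Fintype.card_sigma, ← Finset.card_univ, ← smul_eq_mul, ← Finset.sum_const]
    refine Finset.sum_congr rfl fun P _ => ?_
    rw [Fintype.card_equiv (Fintype.equivFinOfCardEq (by simpa using P.2)), Fintype.card_coe, P.2]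
  let label (Pe : Labelled) (a : s) : Fin m := Pe.2 ⟨Pe.1.1.part a, Pe.1.1.part_mem.2 a.2⟩
  have label_injective : Function.Injective label := by
    rintro ⟨⟨P, hP⟩, e⟩ ⟨⟨Q, hQ⟩, e'⟩ h
    have hlabel (a : s) : e ⟨P.part a, P.part_mem.2 a.2⟩ = e' ⟨Q.part a, Q.part_mem.2 a.2⟩ :=
      congrFun h a
    obtain rfl : P = Q := eq_of_part_eq_part_iff fun a ha b hb => by
      simpa [e.injective.eq_iff, e'.injective.eq_iff] using
        congrArg₂ (· = ·) (hlabel ⟨a, ha⟩) (hlabel ⟨b, hb⟩)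
    obtain rfl : e = e' := Equiv.ext fun ⟨t, ht⟩ => by
      obtain ⟨a, ha, rfl⟩ := P.part_surjOn ht
      exact hlabel ⟨a, ha⟩
    rfl
  calc Fintype.card {P : Finpartition s // #P.parts = m} * m.factorial
      = Fintype.card Labelled := card_labelled.symm
    _ ≤ Fintype.card (s → Fin m) := Fintype.card_le_of_injective label label_injective
    _ = m ^ #s := by simp

end Finpartition

theorem stirling_mul_factorial_le (n m : ℕ) : (stirling n m : ℝ) * m.factorial ≤ (m : ℝ) ^ n := by
  exact_mod_cast card_range n ▸ Finpartition.card_parts_eq_mul_factorial_le (range n) m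

theorem pow_self_le_factorial_mul_exp (m : ℕ) : (m : ℝ) ^ m ≤ m.factorial * Real.exp m := by
  have := Real.pow_div_factorial_le_exp (m : ℝ) m.cast_nonneg m
  rwa [div_le_iff₀ (by positivity), mul_comm] at this

theorem sum_Icc_pow_pred_le (m : ℕ) : ∑ k ∈ Icc 1 m, (k : ℝ) ^ (m - 1) ≤ (m : ℝ) ^ m := by
  rcases Nat.eq_zero_or_pos m with rfl | hm
  · simp
  calc ∑ k ∈ Icc 1 m, (k : ℝ) ^ (m - 1)
      ≤ ∑ _k ∈ Icc 1 m, (m : ℝ) ^ (m - 1) :=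
        sum_le_sum fun k hk => pow_le_pow_left₀ k.cast_nonneg (mod_cast (mem_Icc.1 hk).2) _
    _ = (m : ℝ) ^ m := by simp [mul_pow_sub_one hm.ne']

theorem stirling_mul_sum_pow_le {n m : ℕ} (hmn : m ≤ n) :
    (stirling n m : ℝ) * ∑ k ∈ Icc 1 m, (k : ℝ) ^ (m - 1) ≤ (n : ℝ) ^ n * Real.exp n := by
  have hmn' : (m : ℝ) ≤ n := mod_cast hmn
  calc (stirling n m : ℝ) * ∑ k ∈ Icc 1 m, (k : ℝ) ^ (m - 1)
      ≤ stirling n m * (m.factorial * Real.exp m) := by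
        gcongr
        exact (sum_Icc_pow_pred_le m).trans (pow_self_le_factorial_mul_exp m)
    _ = stirling n m * m.factorial * Real.exp m := by ring
    _ ≤ (m : ℝ) ^ n * Real.exp m := by gcongr; exact stirling_mul_factorial_le n m
    _ ≤ (n : ℝ) ^ n * Real.exp n := by gcongr

theorem stirling_combinatorial_bound_general (n : ℕ) :
    (∑ m ∈ Finset.Icc 1 n, (stirling n m : ℝ) * ∑ k ∈ Finset.Icc 1 m, (k : ℝ) ^ (m - 1))
      ≤ (n.factorial : ℝ) * Real.exp 1 ^ (3 * n) := by
  calc (∑ m ∈ Icc 1 n, (stirling n m : ℝ) * ∑ k ∈ Icc 1 m, (k : ℝ) ^ (m - 1))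
      ≤ #(Icc 1 n) • ((n : ℝ) ^ n * Real.exp n) :=
        sum_le_card_nsmul _ _ _ fun m hm => stirling_mul_sum_pow_le (mem_Icc.1 hm).2
    _ = n * ((n : ℝ) ^ n * Real.exp n) := by simp
    _ ≤ Real.exp n * ((n.factorial * Real.exp n) * Real.exp n) := by
        gcongr
        · linarith [Real.add_one_le_exp (n : ℝ)]
        · exact pow_self_le_factorial_mul_exp n
    _ = n.factorial * Real.exp 1 ^ (3 * n) := by
        rw [← Real.exp_nat_mul, mul_one, Nat.cast_mul, Nat.cast_ofNat,
          show (3 : ℝ) * n = n + n + n by ring, Real.exp_add, Real.exp_add]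
        ring

/-- The combinatorial bound `Σ_{m=1}^{n} S(n,m) Σ_{k=1}^{m} k^{m−1} ≤ n! e^{3n}`
for all `n ≥ 1`. -/
theorem stirling_combinatorial_bound (n : ℕ) (hn : 1 ≤ n) :
    (∑ m ∈ Finset.Icc 1 n, (stirling n m : ℝ) * ∑ k ∈ Finset.Icc 1 m, (k : ℝ) ^ (m - 1))
      ≤ (n.factorial : ℝ) * Real.exp 1 ^ (3 * n) :=
  stirling_combinatorial_bound_general n
end
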